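/- Let n ≥ 2 and let μ be an exchangeable probability measure on (Fin n → ℕ) × (Fin n → ℕ) (invariant under simultaneous coordinate permutations). Define the Rand index R(c₁, c₂) = (n choose 2)⁻¹ · Σ_{i < j} [𝟙(c₁ i = c₁ j ∧ c₂ i = c₂ j) + 𝟙(c₁ i ≠ c₁ j ∧ c₂ i ≠ c₂ j)]. Then the expected Rand index satisfies ∫ R dμ = μ{(c₁,c₂) | c₁ 0 = c₁ 1 ∧ c₂ 0 = c₂ 1} + μ{(c₁,c₂) | c₁ 0 ≠ c₁ 1 ∧ c₂ 0 ≠ c₂ 1}; that is, ER equals the probability that a sample of two subjects has the same number of clusters at both layers (ER = ℙ(K₁₂ = K₂₂), where K_{ℓ2} ∈ {1,2} is the number of clusters at layer ℓ among subjects 0 and 1). -/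
import Mathlib


open MeasureTheory

lemma exists_perm_map_two {n : ℕ} (z o i j : Fin n) (hzo : z ≠ o) (hij : i ≠ j) :
    ∃ σ : Equiv.Perm (Fin n), σ z = i ∧ σ o = j := by
  classical
  let τ : Equiv.Perm (Fin n) := Equiv.swap z i
  have hτz : τ z = i := Equiv.swap_apply_left z i
  have hjz : τ.symm j ≠ z := by
    intro h
    apply hij
    rw [← hτz, ← h, Equiv.apply_symm_apply]
  refine ⟨(Equiv.swap o (τ.symm j)).trans τ, ?_, ?_⟩
  · simp only [Equiv.trans_apply]
    rw [Equiv.swap_apply_of_ne_of_ne hzo hjz.symm, hτz]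
  · simp only [Equiv.trans_apply]
    rw [Equiv.swap_apply_left, Equiv.apply_symm_apply]

/-- Proposition 4 (ER part): for an exchangeable law on pairs of allocation
vectors, the expected Rand index between the two induced partitions equals the
probability that two subjects agree (co-clustered at both layers or separated at
both layers), i.e. `ER = ℙ(K₁₂ = K₂₂)`. -/
theorem stmt_9 (n : ℕ) (hn : 2 ≤ n)
    (μ : Measure ((Fin n → ℕ) × (Fin n → ℕ))) [IsProbabilityMeasure μ]
    (hexch : ∀ σ : Equiv.Perm (Fin n),
      μ.map (fun p : (Fin n → ℕ) × (Fin n → ℕ) => (p.1 ∘ σ, p.2 ∘ σ)) = μ) :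
    ∫ p, ((n.choose 2 : ℝ)⁻¹ *
        ∑ q ∈ Finset.univ.filter (fun q : Fin n × Fin n => q.1 < q.2),
          ((if p.1 q.1 = p.1 q.2 ∧ p.2 q.1 = p.2 q.2 then (1 : ℝ) else 0) +
            (if p.1 q.1 ≠ p.1 q.2 ∧ p.2 q.1 ≠ p.2 q.2 then (1 : ℝ) else 0))) ∂μ =
      (μ {p | p.1 ⟨0, by omega⟩ = p.1 ⟨1, by omega⟩ ∧
              p.2 ⟨0, by omega⟩ = p.2 ⟨1, by omega⟩}).toReal +
      (μ {p | p.1 ⟨0, by omega⟩ ≠ p.1 ⟨1, by omega⟩ ∧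
              p.2 ⟨0, by omega⟩ ≠ p.2 ⟨1, by omega⟩}).toReal := by
  classical
  set z : Fin n := ⟨0, by omega⟩ with hz
  set o : Fin n := ⟨1, by omega⟩ with ho
  have hzo : z ≠ o := by
    intro h
    have := congrArg Fin.val h
    simp [hz, ho] at this
  -- measurability of events of this shape
  have hmeas : ∀ (i j : Fin n) (Q : ℕ → ℕ → ℕ → ℕ → Prop),
      MeasurableSet {p : (Fin n → ℕ) × (Fin n → ℕ) | Q (p.1 i) (p.1 j) (p.2 i) (p.2 j)} := by
    intro i j Q
    have hf : Measurable (fun p : (Fin n → ℕ) × (Fin n → ℕ) =>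
        ((p.1 i, p.1 j), (p.2 i, p.2 j))) := by
      refine Measurable.prod (Measurable.prod ?_ ?_) (Measurable.prod ?_ ?_)
      · exact (measurable_pi_apply i).comp measurable_fst
      · exact (measurable_pi_apply j).comp measurable_fst
      · exact (measurable_pi_apply i).comp measurable_snd
      · exact (measurable_pi_apply j).comp measurable_snd
    have : {p : (Fin n → ℕ) × (Fin n → ℕ) | Q (p.1 i) (p.1 j) (p.2 i) (p.2 j)} =
        (fun p : (Fin n → ℕ) × (Fin n → ℕ) => ((p.1 i, p.1 j), (p.2 i, p.2 j))) ⁻¹'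
          {x : (ℕ × ℕ) × (ℕ × ℕ) | Q x.1.1 x.1.2 x.2.1 x.2.2} := rfl
    rw [this]
    exact hf (Set.to_countable _).measurableSet
  -- exchangeability transfers events at (i,j) to events at (z,o)
  have hswap : ∀ (i j : Fin n), i ≠ j → ∀ Q : ℕ → ℕ → ℕ → ℕ → Prop,
      μ {p | Q (p.1 i) (p.1 j) (p.2 i) (p.2 j)} =
      μ {p | Q (p.1 z) (p.1 o) (p.2 z) (p.2 o)} := by
    intro i j hij Q
    obtain ⟨σ, hσz, hσo⟩ := exists_perm_map_two z o i j hzo hij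
    have hfm : Measurable (fun p : (Fin n → ℕ) × (Fin n → ℕ) => (p.1 ∘ σ, p.2 ∘ σ)) := by
      refine Measurable.prod ?_ ?_ <;>
        exact measurable_pi_lambda _ fun k => (measurable_pi_apply _).comp (by measurability)
    have := hexch σ
    calc μ {p | Q (p.1 i) (p.1 j) (p.2 i) (p.2 j)}
        = μ ((fun p : (Fin n → ℕ) × (Fin n → ℕ) => (p.1 ∘ σ, p.2 ∘ σ)) ⁻¹'
            {p | Q (p.1 z) (p.1 o) (p.2 z) (p.2 o)}) := by
          congr 1
          ext p
          simp only [Set.mem_preimage, Set.mem_setOf_eq, Function.comp_apply, hσz, hσo]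
      _ = μ.map (fun p : (Fin n → ℕ) × (Fin n → ℕ) => (p.1 ∘ σ, p.2 ∘ σ))
            {p | Q (p.1 z) (p.1 o) (p.2 z) (p.2 o)} := by
          rw [Measure.map_apply hfm (hmeas z o Q)]
      _ = μ {p | Q (p.1 z) (p.1 o) (p.2 z) (p.2 o)} := by rw [this]
  -- integrability and value of indicator integrals
  have hindI : ∀ (i j : Fin n) (Q : ℕ → ℕ → ℕ → ℕ → Prop) [∀ a b c d, Decidable (Q a b c d)],
      Integrable (fun p : (Fin n → ℕ) × (Fin n → ℕ) =>
        if Q (p.1 i) (p.1 j) (p.2 i) (p.2 j) then (1 : ℝ) else 0) μ := by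
    intro i j Q _
    have : (fun p : (Fin n → ℕ) × (Fin n → ℕ) =>
        if Q (p.1 i) (p.1 j) (p.2 i) (p.2 j) then (1 : ℝ) else 0) =
        Set.indicator {p | Q (p.1 i) (p.1 j) (p.2 i) (p.2 j)} (fun _ => (1 : ℝ)) := by
      ext p; simp [Set.indicator_apply]
    rw [this]
    exact (integrable_const 1).indicator (hmeas i j Q)
  have hindV : ∀ (i j : Fin n) (Q : ℕ → ℕ → ℕ → ℕ → Prop) [∀ a b c d, Decidable (Q a b c d)],
      ∫ p, (if Q (p.1 i) (p.1 j) (p.2 i) (p.2 j) then (1 : ℝ) else 0) ∂μ =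
        (μ {p | Q (p.1 i) (p.1 j) (p.2 i) (p.2 j)}).toReal := by
    intro i j Q _
    have h1 : (fun p : (Fin n → ℕ) × (Fin n → ℕ) =>
        if Q (p.1 i) (p.1 j) (p.2 i) (p.2 j) then (1 : ℝ) else 0) =
        Set.indicator {p | Q (p.1 i) (p.1 j) (p.2 i) (p.2 j)} (fun _ => (1 : ℝ)) := by
      ext p; simp [Set.indicator_apply]
    rw [h1]
    exact integral_indicator_one (hmeas i j Q)
  -- abbreviations for the two target events
  set A : Set ((Fin n → ℕ) × (Fin n → ℕ)) := {p | p.1 z = p.1 o ∧ p.2 z = p.2 o} with hA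
  set B : Set ((Fin n → ℕ) × (Fin n → ℕ)) := {p | p.1 z ≠ p.1 o ∧ p.2 z ≠ p.2 o} with hB
  have hchoose : (0 : ℕ) < n.choose 2 := Nat.choose_pos hn
  -- cardinality of the pair set
  have hcard : (Finset.univ.filter (fun q : Fin n × Fin n => q.1 < q.2)).card = n.choose 2 := by
    rw [Finset.card_filter, Fintype.sum_prod_type, Finset.sum_comm]
    have : ∀ j : Fin n, (∑ i : Fin n, if i < j then 1 else 0) = (j : ℕ) := by
      intro j
      rw [← Finset.card_filter]
      have : Finset.univ.filter (fun i : Fin n => i < j) = Finset.Iio j := by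
        ext i; simp
      rw [this, Fin.card_Iio]
    simp_rw [this]
    rw [Fin.sum_univ_eq_sum_range (fun i => i) n, Finset.sum_range_id, Nat.choose_two_right]
  -- per-pair value of the integral
  have hpair : ∀ q ∈ Finset.univ.filter (fun q : Fin n × Fin n => q.1 < q.2),
      ∫ p, ((if p.1 q.1 = p.1 q.2 ∧ p.2 q.1 = p.2 q.2 then (1 : ℝ) else 0) +
            (if p.1 q.1 ≠ p.1 q.2 ∧ p.2 q.1 ≠ p.2 q.2 then (1 : ℝ) else 0)) ∂μ =
        (μ A).toReal + (μ B).toReal := by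
    intro q hq
    have hne : q.1 ≠ q.2 := by
      simp only [Finset.mem_filter] at hq
      exact ne_of_lt hq.2
    rw [integral_add (hindI q.1 q.2 (fun a b c d => a = b ∧ c = d))
        (hindI q.1 q.2 (fun a b c d => a ≠ b ∧ c ≠ d)),
      hindV q.1 q.2 (fun a b c d => a = b ∧ c = d),
      hindV q.1 q.2 (fun a b c d => a ≠ b ∧ c ≠ d),
      hswap q.1 q.2 hne (fun a b c d => a = b ∧ c = d),
      hswap q.1 q.2 hne (fun a b c d => a ≠ b ∧ c ≠ d)]
  -- put everything together
  calc ∫ p, ((n.choose 2 : ℝ)⁻¹ *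
        ∑ q ∈ Finset.univ.filter (fun q : Fin n × Fin n => q.1 < q.2),
          ((if p.1 q.1 = p.1 q.2 ∧ p.2 q.1 = p.2 q.2 then (1 : ℝ) else 0) +
            (if p.1 q.1 ≠ p.1 q.2 ∧ p.2 q.1 ≠ p.2 q.2 then (1 : ℝ) else 0))) ∂μ
      = (n.choose 2 : ℝ)⁻¹ * ∫ p, (∑ q ∈ Finset.univ.filter (fun q : Fin n × Fin n => q.1 < q.2),
          ((if p.1 q.1 = p.1 q.2 ∧ p.2 q.1 = p.2 q.2 then (1 : ℝ) else 0) +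
            (if p.1 q.1 ≠ p.1 q.2 ∧ p.2 q.1 ≠ p.2 q.2 then (1 : ℝ) else 0))) ∂μ :=
        integral_const_mul _ _
    _ = (n.choose 2 : ℝ)⁻¹ * ∑ q ∈ Finset.univ.filter (fun q : Fin n × Fin n => q.1 < q.2),
          ∫ p, ((if p.1 q.1 = p.1 q.2 ∧ p.2 q.1 = p.2 q.2 then (1 : ℝ) else 0) +
            (if p.1 q.1 ≠ p.1 q.2 ∧ p.2 q.1 ≠ p.2 q.2 then (1 : ℝ) else 0)) ∂μ := by
        rw [integral_finset_sum]
        intro q hq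
        exact (hindI q.1 q.2 (fun a b c d => a = b ∧ c = d)).add
          (hindI q.1 q.2 (fun a b c d => a ≠ b ∧ c ≠ d))
    _ = (n.choose 2 : ℝ)⁻¹ * ∑ q ∈ Finset.univ.filter (fun q : Fin n × Fin n => q.1 < q.2),
          ((μ A).toReal + (μ B).toReal) := by
        rw [Finset.sum_congr rfl hpair]
    _ = (μ A).toReal + (μ B).toReal := by
        rw [Finset.sum_const, hcard, nsmul_eq_mul, ← mul_assoc,
          inv_mul_cancel₀ (by exact_mod_cast hchoose.ne'), one_mul]
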